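/- For a fixed real number k with −1 < k < 0 and coprime positive integers m, n, we have π_k(x; m, n) − π(x^{k+1}; m, n) = O(x^{k+1} exp(−(α/2)√((k+1) log x))) as x → ∞, where α is the positive constant from the prime number theorem for arithmetic progressions. -/

import Mathlib

/-!
Abel summation gives `π_k(x; m, n) = x ^ k π(x) - ∫₁ˣ k t ^ (k - 1) π(t) dt`. Write
`π = r Li + E` with `Li t = ∫₂ᵗ du / log u` and `r = 1 / φ(m)`. The `Li`-part of the right side is
`Li(x ^ (k + 1))` up to a constant, and it cancels against
`π(x ^ (k + 1)) = r Li(x ^ (k + 1)) + E(x ^ (k + 1))`. What is left is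
`x ^ k E(x) - ∫ k t ^ (k - 1) E(t) dt - E(x ^ (k + 1))` plus a constant. With
`|E t| ≪ t exp (-c √log t)` every term is `O(x ^ (k + 1) exp (-c √((k + 1) log x)))`; for the
integral, split at `t = x ^ (k + 1)`: the lower part is `O(x ^ ((k + 1)²))`, which is smaller
because `k < 0`, and on the upper part `exp (-c √log t) ≤ exp (-c √log (x ^ (k + 1)))`.
-/

open Real Filter Finset

/-- The finset of primes `p ≤ x` with `p ≡ n (mod m)`. -/
noncomputable def primesTo (x : ℝ) (m n : ℕ) : Finset ℕ :=
  (Finset.range (⌊x⌋₊ + 1)).filter fun p => p.Prime ∧ p % m = n % m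

/-- `π(x; m, n)`, the number of primes `p ≤ x` with `p ≡ n (mod m)`. -/
noncomputable def piCount (x : ℝ) (m n : ℕ) : ℝ := (primesTo x m n).card

/-- `π_k(x; m, n) = Σ_{p ≤ x, p ≡ n (mod m)} p^k`. -/
noncomputable def piPow (k x : ℝ) (m n : ℕ) : ℝ :=
  ∑ p ∈ primesTo x m n, (p : ℝ) ^ k

open MeasureTheory Asymptotics

lemma continuousOn_const_mul_rpow_sub_one (k : ℝ) :
    ContinuousOn (fun t : ℝ => k * t ^ (k - 1)) (Set.Ioi 0) := fun t ht =>
  (continuousAt_const.mul (continuousAt_rpow_const t _ (Or.inl (ne_of_gt ht)))).continuousWithinAt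

section PrimeSums

variable (m n : ℕ)

noncomputable def primeAPIndicator (j : ℕ) : ℝ := if j.Prime ∧ j % m = n % m then 1 else 0

lemma sum_primeAPIndicator (t : ℝ) :
    ∑ j ∈ Icc 0 ⌊t⌋₊, primeAPIndicator m n j = piCount t m n := by
  rw [piCount, primesTo, card_filter, Nat.range_succ_eq_Icc_zero]
  push_cast
  rfl

lemma piPow_eq_sum_primeAPIndicator (k t : ℝ) :
    piPow k t m n = ∑ j ∈ Icc 0 ⌊t⌋₊, (j : ℝ) ^ k * primeAPIndicator m n j := by
  rw [piPow, primesTo, sum_filter, Nat.range_succ_eq_Icc_zero]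
  refine sum_congr rfl fun j _ => ?_
  split_ifs with h <;> simp [primeAPIndicator, h]

lemma piCount_mono : Monotone fun t : ℝ => piCount t m n := fun _ _ hst =>
  Nat.cast_le.mpr <| card_le_card <| filter_subset_filter _ <|
    range_subset_range.mpr <| Nat.add_le_add_right (Nat.floor_le_floor hst) 1

theorem piPow_eq_sub_integral (k : ℝ) {b : ℝ} (hb : 1 ≤ b) :
    piPow k b m n =
      b ^ k * piCount b m n - ∫ t in (1 : ℝ)..b, k * t ^ (k - 1) * piCount t m n := by
  have hderiv : deriv (fun t : ℝ => t ^ k) = fun t => k * t ^ (k - 1) :=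
    funext fun t => deriv_rpow_const t k
  have hcont : ContinuousOn (fun t : ℝ => k * t ^ (k - 1)) (Set.Icc 1 b) :=
    (continuousOn_const_mul_rpow_sub_one k).mono fun t ht => zero_lt_one.trans_le ht.1
  have habel := sum_mul_eq_sub_integral_mul₀ (primeAPIndicator m n)
    (by simp [primeAPIndicator, Nat.not_prime_zero]) b
    (fun t ht => (hasDerivAt_rpow_const (p := k) (Or.inl (by linarith [ht.1]))).differentiableAt)
    (hderiv ▸ hcont.integrableOn_Icc)
  simp only [sum_primeAPIndicator, hderiv] at habel
  rw [piPow_eq_sum_primeAPIndicator, habel, intervalIntegral.integral_of_le hb]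

end PrimeSums

section LogIntegral

noncomputable def logIntegral (x : ℝ) : ℝ := ∫ t in (2 : ℝ)..x, 1 / log t

lemma continuousOn_one_div_log : ContinuousOn (fun t : ℝ => 1 / log t) (Set.Ioi 1) :=
  fun t ht => (continuousAt_const.div (continuousAt_log (by linarith [Set.mem_Ioi.mp ht]))
    (log_pos ht).ne').continuousWithinAt

lemma uIcc_subset_Ioi {a b c : ℝ} (ha : c < a) (hb : c < b) : Set.uIcc a b ⊆ Set.Ioi c :=
  fun _ ht => (lt_min ha hb).trans_le ht.1

theorem hasDerivAt_integral_of_continuousOn_Ioi {f : ℝ → ℝ} {c a x : ℝ}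
    (hf : ContinuousOn f (Set.Ioi c)) (ha : c < a) (hx : c < x) :
    HasDerivAt (fun y => ∫ t in a..y, f t) (f x) x :=
  intervalIntegral.integral_hasDerivAt_right (hf.mono (uIcc_subset_Ioi ha hx)).intervalIntegrable
    (hf.stronglyMeasurableAtFilter isOpen_Ioi x hx) (hf.continuousAt (Ioi_mem_nhds hx))

lemma hasDerivAt_logIntegral {x : ℝ} (hx : 1 < x) : HasDerivAt logIntegral (1 / log x) x :=
  hasDerivAt_integral_of_continuousOn_Ioi continuousOn_one_div_log one_lt_two hx

lemma continuousOn_logIntegral : ContinuousOn logIntegral (Set.Ioi 1) :=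
  fun _ hx => (hasDerivAt_logIntegral hx).continuousAt.continuousWithinAt

/-- Both sides equal `∫ t in a..x, t ^ k / log t`: substitute `u = t ^ (k + 1)` on the left,
integrate by parts on the right. -/
theorem logIntegral_rpow_sub_logIntegral_rpow {k a x : ℝ} (hk : -1 < k) (ha : 1 < a)
    (hx : 1 < x) :
    logIntegral (x ^ (k + 1)) - logIntegral (a ^ (k + 1)) =
      x ^ k * logIntegral x - a ^ k * logIntegral a -
        ∫ t in a..x, k * t ^ (k - 1) * logIntegral t := by
  set F : ℝ → ℝ := fun y => y ^ k * logIntegral y -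
    (∫ t in a..y, k * t ^ (k - 1) * logIntegral t) - logIntegral (y ^ (k + 1))
  have hF : ∀ y ∈ Set.Ioi (1 : ℝ), HasDerivAt F 0 y := by
    intro y hy
    have hy0 : 0 < y := zero_lt_one.trans hy
    have hpow := hasDerivAt_rpow_const (p := k) (Or.inl hy0.ne')
    have hint := hasDerivAt_integral_of_continuousOn_Ioi
      (((continuousOn_const_mul_rpow_sub_one k).mono (Set.Ioi_subset_Ioi zero_le_one)).mul
        continuousOn_logIntegral) ha hy
    have hsubst := (hasDerivAt_logIntegral (one_lt_rpow hy (by linarith))).comp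
      (h := fun y : ℝ => y ^ (k + 1)) y (hasDerivAt_rpow_const (Or.inl hy0.ne'))
    refine (((hpow.mul (hasDerivAt_logIntegral hy)).sub hint).sub hsubst).congr_deriv ?_
    have : log y ≠ 0 := (log_pos hy).ne'
    have : k + 1 ≠ 0 := by linarith
    rw [Pi.mul_apply, log_rpow hy0, add_sub_cancel_right]
    field_simp
    ring
  have hconst := isOpen_Ioi.is_const_of_deriv_eq_zero isPreconnected_Ioi
    (fun y hy => (hF y hy).differentiableAt.differentiableWithinAt) (fun y hy => (hF y hy).deriv)
    hx ha
  simp only [F, intervalIntegral.integral_same] at hconst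
  linarith

end LogIntegral

section ErrorTerm

variable (m n : ℕ)

noncomputable def piCountError (r t : ℝ) : ℝ := piCount t m n - r * logIntegral t

lemma intervalIntegrable_piCountError (r : ℝ) {a b : ℝ} (ha : 1 < a) (hb : 1 < b) :
    IntervalIntegrable (piCountError m n r) volume a b :=
  (piCount_mono m n).intervalIntegrable.sub
    ((continuousOn_logIntegral.mono (uIcc_subset_Ioi ha hb)).intervalIntegrable.const_mul r)

lemma intervalIntegrable_rpow_sub_one_mul {f : ℝ → ℝ} {k a b : ℝ}
    (hf : IntervalIntegrable f volume a b) (ha : 0 < a) (hb : 0 < b) :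
    IntervalIntegrable (fun t => k * t ^ (k - 1) * f t) volume a b :=
  hf.continuousOn_mul ((continuousOn_const_mul_rpow_sub_one k).mono (uIcc_subset_Ioi ha hb))

theorem piPow_sub_piCount_rpow_eq {k T₀ : ℝ} (hk : -1 < k) (hT₀ : 1 < T₀) (r : ℝ) :
    ∃ K, ∀ x, T₀ ≤ x → piPow k x m n - piCount (x ^ (k + 1)) m n =
      x ^ k * piCountError m n r x - (∫ t in T₀..x, k * t ^ (k - 1) * piCountError m n r t) -
        piCountError m n r (x ^ (k + 1)) + K := by
  refine ⟨r * (T₀ ^ k * logIntegral T₀ - logIntegral (T₀ ^ (k + 1))) -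
    ∫ t in (1 : ℝ)..T₀, k * t ^ (k - 1) * piCount t m n, fun x hx => ?_⟩
  have hx1 : 1 < x := hT₀.trans_le hx
  have hsplit := intervalIntegral.integral_add_adjacent_intervals
    (intervalIntegrable_rpow_sub_one_mul (k := k) (piCount_mono m n).intervalIntegrable
      one_pos (zero_lt_one.trans hT₀))
    (intervalIntegrable_rpow_sub_one_mul (k := k) (piCount_mono m n).intervalIntegrable
      (zero_lt_one.trans hT₀) (zero_lt_one.trans hx1))
  have hdecomp : ∫ t in T₀..x, k * t ^ (k - 1) * piCount t m n =
      (∫ t in T₀..x, k * t ^ (k - 1) * piCountError m n r t) +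
        r * ∫ t in T₀..x, k * t ^ (k - 1) * logIntegral t := by
    rw [← intervalIntegral.integral_const_mul, ← intervalIntegral.integral_add
      (intervalIntegrable_rpow_sub_one_mul (intervalIntegrable_piCountError m n r hT₀ hx1)
        (zero_lt_one.trans hT₀) (zero_lt_one.trans hx1))
      ((intervalIntegrable_rpow_sub_one_mul ((continuousOn_logIntegral.mono
        (uIcc_subset_Ioi hT₀ hx1)).intervalIntegrable) (zero_lt_one.trans hT₀)
          (zero_lt_one.trans hx1)).const_mul r)]
    refine intervalIntegral.integral_congr fun t _ => ?_
    simp only [piCountError]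
    ring
  have hli := logIntegral_rpow_sub_logIntegral_rpow hk hT₀ hx1
  rw [piPow_eq_sub_integral m n k hx1.le, ← hsplit, hdecomp]
  simp only [piCountError]
  linear_combination -r * hli

end ErrorTerm

section Asymptotics

noncomputable def pntError (c y : ℝ) : ℝ := y * exp (-c * sqrt (log y))

lemma pntError_nonneg (c : ℝ) {y : ℝ} (hy : 0 ≤ y) : 0 ≤ pntError c y :=
  mul_nonneg hy (exp_pos _).le

lemma pntError_rpow (c k : ℝ) {x : ℝ} (hx : 0 < x) :
    pntError c (x ^ k) = x ^ k * exp (-c * sqrt (k * log x)) := by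
  rw [pntError, log_rpow hx]

lemma eventually_rpow_le_pntError (c : ℝ) {s : ℝ} (hs : s < 1) :
    ∀ᶠ y in atTop, y ^ s ≤ pntError c y := by
  have hε : 0 < 1 - s := by linarith
  filter_upwards [tendsto_log_atTop.eventually_ge_atTop ((c / (1 - s)) ^ 2),
    eventually_gt_atTop 0] with y hlog hy
  have hsqrt : c ≤ (1 - s) * sqrt (log y) := by
    have := (div_le_iff₀' hε).mp ((le_abs_self _).trans (abs_le_sqrt hlog))
    linarith
  have hlog0 : 0 ≤ log y := (sq_nonneg _).trans hlog
  calc y ^ s = y * exp (-((1 - s) * log y)) := by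
        rw [show s = 1 - (1 - s) by ring, rpow_sub hy, rpow_one, rpow_def_of_pos hy, exp_neg]
        ring_nf
    _ ≤ pntError c y := by
        rw [pntError]
        gcongr
        nlinarith [mul_le_mul_of_nonneg_right hsqrt (sqrt_nonneg (log y)), sq_sqrt hlog0]

lemma rpow_mul_pntError_le {c k x : ℝ} (hc : 0 ≤ c) (hk : k ≤ 0) (hx : 1 ≤ x) :
    x ^ k * pntError c x ≤ pntError c (x ^ (k + 1)) := by
  have hx0 : 0 < x := by linarith
  rw [pntError, pntError_rpow c _ hx0, ← mul_assoc, ← rpow_add_one hx0.ne']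
  have hlog : 0 ≤ log x := log_nonneg hx
  have hsqrt : sqrt ((k + 1) * log x) ≤ sqrt (log x) := sqrt_le_sqrt (by nlinarith)
  gcongr x ^ (k + 1) * exp ?_
  nlinarith [mul_le_mul_of_nonneg_left hsqrt hc]

lemma isBigO_const_pntError_rpow (c : ℝ) {k : ℝ} (hk₁ : -1 < k) (hk₂ : k < 0) (K : ℝ) :
    (fun _ : ℝ => K) =O[atTop] fun x => pntError c (x ^ (k + 1)) := by
  refine (isBigO_const_one ℝ K atTop).trans (IsBigO.of_bound' ?_)
  filter_upwards [(tendsto_rpow_atTop (by linarith : 0 < k + 1)).eventually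
    (eventually_rpow_le_pntError c (by linarith : k + 1 < 1)), eventually_ge_atTop 1] with x hx hx1
  have h1 : 1 ≤ (x ^ (k + 1)) ^ (k + 1) := one_le_rpow (one_le_rpow hx1 (by linarith)) (by linarith)
  rw [norm_one, norm_of_nonneg (pntError_nonneg c (by positivity))]
  exact h1.trans hx

lemma continuousOn_rpow_mul_exp (c k : ℝ) :
    ContinuousOn (fun t : ℝ => t ^ k * exp (-c * sqrt (log t))) (Set.Ioi 0) := by
  intro t ht
  exact ((continuousAt_rpow_const t k (Or.inl (ne_of_gt ht))).mul
    (((continuousAt_log (ne_of_gt ht)).sqrt.const_mul (-c)).rexp)).continuousWithinAt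

lemma integral_rpow_mul_exp_le {c k T₀ x : ℝ} (hc : 0 ≤ c) (hk₁ : -1 < k) (hk₂ : k ≤ 0)
    (hT₀ : 0 < T₀) (hT₀x : T₀ ≤ x ^ (k + 1)) (hx : 1 ≤ x) :
    ∫ t in T₀..x, t ^ k * exp (-c * sqrt (log t)) ≤
      ((x ^ (k + 1)) ^ (k + 1) + pntError c (x ^ (k + 1))) / (k + 1) := by
  set y := x ^ (k + 1)
  have hk : 0 < k + 1 := by linarith
  have hy : 0 < y := hT₀.trans_le hT₀x
  have hyx : y ≤ x := rpow_le_self_of_one_le hx (by linarith)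
  have hint : ∀ {a b : ℝ}, 0 < a → 0 < b →
      IntervalIntegrable (fun t => t ^ k * exp (-c * sqrt (log t))) volume a b := fun ha hb =>
    ((continuousOn_rpow_mul_exp c k).mono (uIcc_subset_Ioi ha hb)).intervalIntegrable
  have hlow : ∫ t in T₀..y, t ^ k * exp (-c * sqrt (log t)) ≤ y ^ (k + 1) / (k + 1) := calc
    _ ≤ ∫ t in T₀..y, t ^ k :=
        intervalIntegral.integral_mono_on hT₀x (hint hT₀ hy)
          (intervalIntegral.intervalIntegrable_rpow' hk₁)
          fun t ht => mul_le_of_le_one_right (rpow_nonneg (hT₀.trans_le ht.1).le _)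
            (exp_le_one_iff.mpr (by nlinarith [sqrt_nonneg (log t)]))
    _ = (y ^ (k + 1) - T₀ ^ (k + 1)) / (k + 1) := integral_rpow (Or.inl hk₁)
    _ ≤ _ := by gcongr; exact sub_le_self _ (rpow_nonneg hT₀.le _)
  have hhigh : ∫ t in y..x, t ^ k * exp (-c * sqrt (log t)) ≤ pntError c y / (k + 1) := calc
    _ ≤ ∫ t in y..x, exp (-c * sqrt (log y)) * t ^ k :=
        intervalIntegral.integral_mono_on hyx (hint hy (by linarith))
          ((intervalIntegral.intervalIntegrable_rpow' hk₁).const_mul _) fun t ht => by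
            have : sqrt (log y) ≤ sqrt (log t) := sqrt_le_sqrt (log_le_log hy ht.1)
            rw [mul_comm]
            refine mul_le_mul_of_nonneg_right (exp_le_exp.mpr ?_)
              (rpow_nonneg (hy.trans_le ht.1).le _)
            nlinarith [mul_le_mul_of_nonneg_left this hc]
    _ = exp (-c * sqrt (log y)) * ((y - y ^ (k + 1)) / (k + 1)) := by
        rw [intervalIntegral.integral_const_mul, integral_rpow (Or.inl hk₁)]
    _ ≤ exp (-c * sqrt (log y)) * (y / (k + 1)) := by
        gcongr; exact sub_le_self _ (rpow_nonneg hy.le _)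
    _ = pntError c y / (k + 1) := by rw [pntError]; ring
  rw [← intervalIntegral.integral_add_adjacent_intervals (hint hT₀ hy) (hint hy (by linarith)),
    add_div]
  exact add_le_add hlow hhigh

theorem isBigO_integral_rpow_sub_one_mul {E : ℝ → ℝ} {c k T₀ : ℝ} (hc : 0 ≤ c) (hk₁ : -1 < k)
    (hk₂ : k < 0) (hT₀ : 0 < T₀) (hint : ∀ b, T₀ ≤ b → IntervalIntegrable E volume T₀ b)
    (hE : E =O[atTop] pntError c) :
    (fun x => ∫ t in T₀..x, k * t ^ (k - 1) * E t) =O[atTop]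
      fun x => pntError c (x ^ (k + 1)) := by
  have hk : 0 < k + 1 := by linarith
  obtain ⟨C, hC, hEC⟩ := hE.exists_nonneg
  obtain ⟨T₁, hT₁⟩ := eventually_atTop.mp hEC.bound
  set T := max T₀ T₁
  have hT : 0 < T := hT₀.trans_le (le_max_left _ _)
  have hφE : ∀ b, T₀ ≤ b → IntervalIntegrable (fun t => k * t ^ (k - 1) * E t) volume T₀ b :=
    fun b hb => intervalIntegrable_rpow_sub_one_mul (hint b hb) hT₀ (hT₀.trans_le hb)
  have hpointwise : ∀ t, T < t →
      ‖k * t ^ (k - 1) * E t‖ ≤ |k| * C * (t ^ k * exp (-c * sqrt (log t))) := by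
    intro t ht
    have ht0 : 0 < t := hT.trans ht
    have hEt := hT₁ t ((le_max_right _ _).trans ht.le)
    rw [norm_of_nonneg (pntError_nonneg c ht0.le)] at hEt
    calc ‖k * t ^ (k - 1) * E t‖ = |k| * t ^ (k - 1) * ‖E t‖ := by
          rw [norm_mul, norm_mul, norm_eq_abs, norm_of_nonneg (rpow_nonneg ht0.le _)]
      _ ≤ |k| * t ^ (k - 1) * (C * pntError c t) := by gcongr
      _ = |k| * C * (t ^ k * exp (-c * sqrt (log t))) := by
          rw [pntError, rpow_sub_one ht0.ne']
          field_simp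
  have htail : (fun x => ∫ t in T..x, k * t ^ (k - 1) * E t) =O[atTop]
      fun x => pntError c (x ^ (k + 1)) := by
    have hy := tendsto_rpow_atTop hk
    refine IsBigO.of_bound (2 * |k| * C / (k + 1)) ?_
    filter_upwards [hy.eventually_ge_atTop T, hy.eventually (eventually_rpow_le_pntError c
      (by linarith : k + 1 < 1)), eventually_ge_atTop 1] with x hTy hy_le hx
    have hTx : T ≤ x := hTy.trans (rpow_le_self_of_one_le hx (by linarith))
    rw [norm_of_nonneg (pntError_nonneg c (rpow_nonneg (by linarith) _))]
    calc ‖∫ t in T..x, k * t ^ (k - 1) * E t‖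
        ≤ ∫ t in T..x, |k| * C * (t ^ k * exp (-c * sqrt (log t))) :=
          intervalIntegral.norm_integral_le_of_norm_le hTx
            (ae_of_all _ fun t ht => hpointwise t ht.1)
            (((continuousOn_rpow_mul_exp c k).mono (uIcc_subset_Ioi hT
              (hT.trans_le hTx))).intervalIntegrable.const_mul _)
      _ = |k| * C * ∫ t in T..x, t ^ k * exp (-c * sqrt (log t)) :=
          intervalIntegral.integral_const_mul _ _
      _ ≤ |k| * C * (((x ^ (k + 1)) ^ (k + 1) + pntError c (x ^ (k + 1))) / (k + 1)) := by
          gcongr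
          exact integral_rpow_mul_exp_le hc hk₁ hk₂.le hT hTy hx
      _ ≤ |k| * C * ((pntError c (x ^ (k + 1)) + pntError c (x ^ (k + 1))) / (k + 1)) := by
          gcongr
      _ = 2 * |k| * C / (k + 1) * pntError c (x ^ (k + 1)) := by ring
  have hsplit : ∀ x, T₀ ≤ x → ∫ t in T₀..x, k * t ^ (k - 1) * E t =
      (∫ t in T₀..T, k * t ^ (k - 1) * E t) + ∫ t in T..x, k * t ^ (k - 1) * E t := fun x hx =>
    (intervalIntegral.integral_add_adjacent_intervals (hφE T (le_max_left _ _))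
      ((hφE T (le_max_left _ _)).symm.trans (hφE x hx))).symm
  refine ((isBigO_const_pntError_rpow c hk₁ hk₂
    (∫ t in T₀..T, k * t ^ (k - 1) * E t)).add htail).congr' ?_ EventuallyEq.rfl
  filter_upwards [eventually_ge_atTop T₀] with x hx using (hsplit x hx).symm

end Asymptotics

theorem piPow_sub_piCount_rpow_isBigO (m n : ℕ) {c k r : ℝ} (hc : 0 ≤ c) (hk₁ : -1 < k)
    (hk₂ : k < 0) (hE : piCountError m n r =O[atTop] pntError c) :
    (fun x => piPow k x m n - piCount (x ^ (k + 1)) m n) =O[atTop]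
      fun x => pntError c (x ^ (k + 1)) := by
  obtain ⟨K, hK⟩ := piPow_sub_piCount_rpow_eq m n hk₁ one_lt_two r
  have hmain : (fun x => x ^ k * piCountError m n r x) =O[atTop]
      fun x => pntError c (x ^ (k + 1)) := by
    refine ((isBigO_refl (fun x : ℝ => x ^ k) atTop).mul hE).trans (IsBigO.of_bound' ?_)
    filter_upwards [eventually_ge_atTop 1] with x hx
    have hx0 : 0 ≤ x := by linarith
    rw [norm_of_nonneg (mul_nonneg (rpow_nonneg hx0 _) (pntError_nonneg c hx0)),
      norm_of_nonneg (pntError_nonneg c (rpow_nonneg hx0 _))]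
    exact rpow_mul_pntError_le hc hk₂.le hx
  have hintegral := isBigO_integral_rpow_sub_one_mul hc hk₁ hk₂ two_pos
    (fun b hb => intervalIntegrable_piCountError m n r one_lt_two (one_lt_two.trans_le hb)) hE
  have hsubst := hE.comp_tendsto (tendsto_rpow_atTop (by linarith : 0 < k + 1))
  refine (((hmain.sub hintegral).sub hsubst).add (isBigO_const_pntError_rpow c hk₁ hk₂ K)).congr'
    ?_ EventuallyEq.rfl
  filter_upwards [eventually_ge_atTop 2] with x hx using (hK x hx).symm

theorem stmt_2_general (k : ℝ) (hk₁ : -1 < k) (hk₂ : k < 0) (m n : ℕ)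
    (α : ℝ) (hα : 0 < α)
    (hPNT : (fun x => piCount x m n - (1 / (Nat.totient m : ℝ)) * ∫ t in (2:ℝ)..x, 1 / Real.log t)
        =O[atTop] fun x => x * Real.exp (-(α / 2) * Real.sqrt (Real.log x))) :
    (fun x : ℝ => piPow k x m n - piCount (x ^ (k + 1)) m n)
      =O[atTop] fun x => x ^ (k + 1) * Real.exp (-(α / 2) * Real.sqrt ((k + 1) * Real.log x)) := by
  refine (piPow_sub_piCount_rpow_isBigO m n (by linarith) hk₁ hk₂ hPNT).congr' EventuallyEq.rfl ?_
  filter_upwards [eventually_gt_atTop 0] with x hx using pntError_rpow _ _ hx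

theorem stmt_2 (k : ℝ) (hk₁ : -1 < k) (hk₂ : k < 0) (m n : ℕ) (hm : 0 < m) (hn : 0 < n)
    (hmn : Nat.Coprime m n) (α : ℝ) (hα : 0 < α)
    (hPNT : (fun x => piCount x m n - (1 / (Nat.totient m : ℝ)) * ∫ t in (2:ℝ)..x, 1 / Real.log t)
        =O[atTop] fun x => x * Real.exp (-(α / 2) * Real.sqrt (Real.log x))) :
    (fun x : ℝ => piPow k x m n - piCount (x ^ (k + 1)) m n)
      =O[atTop] fun x => x ^ (k + 1) * Real.exp (-(α / 2) * Real.sqrt ((k + 1) * Real.log x)) :=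
  stmt_2_general k hk₁ hk₂ m n α hα hPNT
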